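/- arXiv:2602.13809 — 12 statements merged into one kernel-verified Lean document; each statement's English description precedes it below -/
import Mathlib

section
/- Let R be a commutative ring, S a multiplicative subset of R, and M, N R-modules. If f : M → N is a u-S-isomorphism, then there exist an R-linear map g : N → M and an element t ∈ S such that f ∘ g = t • id_N and g ∘ f = t • id_M (and such g is itself a u-S-isomorphism). -/
universe u v w

/-- An `R`-module `T` is uniformly `S`-torsion if a single `s ∈ S` annihilates it. -/
def IsUSTorsion (R : Type u) [CommRing R] (S : Submonoid R)
    (T : Type v) [AddCommGroup T] [Module R T] : Prop :=
  ∃ s ∈ S, ∀ x : T, s • x = 0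

/-- `f` is a `u`-`S`-monomorphism: its kernel is `u`-`S`-torsion. -/
def IsUSMono {R : Type u} [CommRing R] (S : Submonoid R)
    {M : Type v} {N : Type w} [AddCommGroup M] [Module R M]
    [AddCommGroup N] [Module R N] (f : M →ₗ[R] N) : Prop :=
  ∃ s ∈ S, ∀ x ∈ LinearMap.ker f, s • x = (0 : M)

/-- `f` is a `u`-`S`-epimorphism: its cokernel is `u`-`S`-torsion. -/
def IsUSEpi {R : Type u} [CommRing R] (S : Submonoid R)
    {M : Type v} {N : Type w} [AddCommGroup M] [Module R M]
    [AddCommGroup N] [Module R N] (f : M →ₗ[R] N) : Prop :=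
  ∃ s ∈ S, ∀ y : N, s • y ∈ LinearMap.range f

/-- `f` is a `u`-`S`-isomorphism: both a `u`-`S`-monomorphism and a `u`-`S`-epimorphism. -/
def IsUSIso {R : Type u} [CommRing R] (S : Submonoid R)
    {M : Type v} {N : Type w} [AddCommGroup M] [Module R M]
    [AddCommGroup N] [Module R N] (f : M →ₗ[R] N) : Prop :=
  IsUSMono S f ∧ IsUSEpi S f

/-- A `u`-`S`-isomorphism admits a quasi-inverse `g` with `f ∘ g = t • id` and
`g ∘ f = t • id` for some `t ∈ S`, and `g` is itself a `u`-`S`-isomorphism. -/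
theorem uSIso_quasi_inverse
    {R : Type u} [CommRing R] (S : Submonoid R)
    {M : Type v} {N : Type w} [AddCommGroup M] [Module R M]
    [AddCommGroup N] [Module R N] (f : M →ₗ[R] N)
    (hf : IsUSIso S f) :
    ∃ g : N →ₗ[R] M, IsUSIso S g ∧ ∃ t ∈ S,
      f.comp g = t • (LinearMap.id : N →ₗ[R] N) ∧
      g.comp f = t • (LinearMap.id : M →ₗ[R] M) := by
  obtain ⟨⟨s₁, hs₁S, hs₁⟩, ⟨s₂, hs₂S, hs₂⟩⟩ := hf
  -- choose preimages
  have hpre : ∀ y : N, ∃ x : M, f x = s₂ • y := by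
    intro y
    obtain ⟨x, hx⟩ := hs₂ y
    exact ⟨x, hx⟩
  choose c hc using hpre
  -- key: f x = f x' → s₁ • x = s₁ • x'
  have key : ∀ x x' : M, f x = f x' → s₁ • x = s₁ • x' := by
    intro x x' h
    have hk : x - x' ∈ LinearMap.ker f := by
      simp [LinearMap.mem_ker, h]
    have := hs₁ _ hk
    rw [smul_sub, sub_eq_zero] at this
    exact this
  set g : N →ₗ[R] M :=
    { toFun := fun y => s₁ • c y
      map_add' := by
        intro y z
        have : f (c (y + z)) = f (c y + c z) := by
          simp [hc, smul_add]
        have := key _ _ this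
        simpa [smul_add] using this
      map_smul' := by
        intro r y
        have : f (c (r • y)) = f (r • c y) := by
          rw [map_smul, hc, hc, smul_comm]
        have h2 := key _ _ this
        simp only [RingHom.id_apply]
        rw [h2, smul_comm] } with hg
  have hfg : ∀ y : N, f (g y) = (s₁ * s₂) • y := by
    intro y
    simp only [hg, LinearMap.coe_mk, AddHom.coe_mk, map_smul, hc, mul_smul]
  have hgf : ∀ m : M, g (f m) = (s₁ * s₂) • m := by
    intro m
    have : f (c (f m)) = f (s₂ • m) := by rw [hc, map_smul]
    have h2 := key _ _ this
    simp only [hg, LinearMap.coe_mk, AddHom.coe_mk]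
    rw [h2, smul_comm, ← mul_smul, mul_comm]
  have htS : s₁ * s₂ ∈ S := S.mul_mem hs₁S hs₂S
  refine ⟨g, ⟨⟨s₁ * s₂, htS, ?_⟩, ⟨s₁ * s₂, htS, ?_⟩⟩, s₁ * s₂, htS, ?_, ?_⟩
  · intro y hy
    rw [LinearMap.mem_ker] at hy
    have := hfg y
    rw [hy, map_zero] at this
    exact this.symm
  · intro m
    exact ⟨f m, hgf m⟩
  · ext y; simpa using hfg y
  · ext m; simpa using hgf m
end

section
/- Let R be a commutative ring, S a multiplicative subset of R, and M an R-module. Then M is u-S-Noetherian if and only if there exists s ∈ S such that every ascending chain M₁ ⊆ M₂ ⊆ M₃ ⊆ ⋯ of submodules of M is stationary with respect to s, i.e. there exists k ≥ 1 with s • Mₙ ⊆ M_k for all n ≥ k. -/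
/-- `M` is `u`-`S`-Noetherian: a single `s ∈ S` witnesses `S`-finiteness of all
submodules of `M`. -/
def IsUSNoetherian (R : Type*) [CommRing R] (S : Submonoid R)
    (M : Type*) [AddCommGroup M] [Module R M] : Prop :=
  ∃ s ∈ S, ∀ N : Submodule R M, ∃ F : Submodule R M,
    F.FG ∧ F ≤ N ∧ ∀ x ∈ N, s • x ∈ F

/-- `M` is `u`-`S`-Noetherian iff there is `s ∈ S` such that every ascending chain of
submodules of `M` is stationary with respect to `s`. -/
theorem uSNoetherian_iff_ascending_chain
    (R : Type*) [CommRing R] (S : Submonoid R)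
    (M : Type*) [AddCommGroup M] [Module R M] :
    IsUSNoetherian R S M ↔
      ∃ s ∈ S, ∀ c : ℕ → Submodule R M, Monotone c →
        ∃ k : ℕ, ∀ n ≥ k, ∀ x ∈ c n, s • x ∈ c k := by
  constructor
  · rintro ⟨s, hsS, hN⟩
    refine ⟨s, hsS, fun c hc => ?_⟩
    obtain ⟨F, hFG, hFle, hFs⟩ := hN (⨆ n, c n)
    obtain ⟨T, hT⟩ := hFG
    have hmem : ∀ x ∈ T, ∃ k, x ∈ c k := by
      intro x hx
      have hxF : x ∈ F := hT ▸ Submodule.subset_span hx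
      have h2 := hFle hxF
      rwa [Submodule.mem_iSup_of_directed _ (hc.directed_le)] at h2
    choose f hf using hmem
    set k := T.attach.sup fun x => f x.1 x.2 with hk
    have hFk : F ≤ c k := by
      rw [← hT, Submodule.span_le]
      intro x hx
      exact hc (Finset.le_sup (f := fun x => f x.1 x.2) (Finset.mem_attach T ⟨x, hx⟩))
        (hf x hx)
    refine ⟨k, fun n hn x hx => ?_⟩
    exact hFk (hFs x (le_iSup c n hx))
  · rintro ⟨s, hsS, hchain⟩
    refine ⟨s, hsS, fun N => ?_⟩
    by_contra h
    push_neg at h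
    have step : ∀ F : {F : Submodule R M // F.FG ∧ F ≤ N},
        ∃ x : M, x ∈ N ∧ s • x ∉ F.1 := by
      rintro ⟨F, hFG, hFle⟩
      obtain ⟨x, hx, hsx⟩ := h F hFG hFle
      exact ⟨x, hx, hsx⟩
    choose pick hpickN hpicks using step
    let next : {F : Submodule R M // F.FG ∧ F ≤ N} → {F : Submodule R M // F.FG ∧ F ≤ N} :=
      fun F => ⟨F.1 ⊔ Submodule.span R {pick F},
        F.2.1.sup (Submodule.fg_span_singleton _),
        sup_le F.2.2 ((Submodule.span_singleton_le_iff_mem _ _).2 (hpickN F))⟩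
    let F : ℕ → {F : Submodule R M // F.FG ∧ F ≤ N} :=
      fun n => next^[n] ⟨⊥, Submodule.fg_bot, bot_le⟩
    have hsucc : ∀ n, F (n + 1) = next (F n) := fun n =>
      Function.iterate_succ_apply' next n _
    have hmono : Monotone fun n => (F n).1 := by
      apply monotone_nat_of_le_succ
      intro n
      rw [hsucc n]
      exact le_sup_left
    obtain ⟨k, hk⟩ := hchain (fun n => (F n).1) hmono
    have hx : pick (F k) ∈ (F (k + 1)).1 := by
      rw [hsucc k]
      exact Submodule.mem_sup_right (Submodule.mem_span_singleton_self _)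
    exact hpicks (F k) (hk (k + 1) (Nat.le_succ k) _ hx)
end

section
/- Let R be a commutative ring, S a multiplicative subset of R, and 0 → A → B → C → 0 a short exact sequence of R-modules. Then B is u-S-Noetherian if and only if both A and C are u-S-Noetherian. -/
/-- Lift a finitely generated submodule along the image of a map. -/
lemma exists_fg_le_map_eq {R : Type*} [CommRing R] {B C : Type*}
    [AddCommGroup B] [Module R B] [AddCommGroup C] [Module R C]
    (g : B →ₗ[R] C) (N : Submodule R B) (F : Submodule R C)
    (hF : F.FG) (hle : F ≤ N.map g) :
    ∃ P : Submodule R B, P.FG ∧ P ≤ N ∧ P.map g = F := by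
  obtain ⟨t, rfl⟩ := hF
  have hmem : ∀ c : t, ∃ b, b ∈ N ∧ g b = (c : C) := by
    intro c
    have : (c : C) ∈ Submodule.span R (t : Set C) :=
      Submodule.subset_span c.2
    obtain ⟨b, hb, hgb⟩ := hle this
    exact ⟨b, hb, hgb⟩
  choose b hbN hgb using hmem
  refine ⟨Submodule.span R (Set.range b), ?_, ?_, ?_⟩
  · exact Submodule.fg_span (Set.finite_range b)
  · rw [Submodule.span_le]
    rintro _ ⟨c, rfl⟩
    exact hbN c
  · rw [Submodule.map_span]
    congr 1
    ext x
    constructor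
    · rintro ⟨_, ⟨c, rfl⟩, rfl⟩
      rw [hgb c]; exact c.2
    · intro hx
      exact ⟨b ⟨x, hx⟩, ⟨⟨x, hx⟩, rfl⟩, hgb ⟨x, hx⟩⟩

/-- For a short exact sequence `0 → A → B → C → 0`, `B` is `u`-`S`-Noetherian iff
`A` and `C` are `u`-`S`-Noetherian. -/
theorem uSNoetherian_of_shortExact
    (R : Type*) [CommRing R] (S : Submonoid R)
    {A B C : Type*} [AddCommGroup A] [Module R A] [AddCommGroup B] [Module R B]
    [AddCommGroup C] [Module R C]
    (f : A →ₗ[R] B) (g : B →ₗ[R] C)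
    (hf : Function.Injective f) (hg : Function.Surjective g)
    (hfg : LinearMap.range f = LinearMap.ker g) :
    IsUSNoetherian R S B ↔ IsUSNoetherian R S A ∧ IsUSNoetherian R S C := by
  constructor
  · rintro ⟨s, hsS, hs⟩
    constructor
    · -- A is u-S-Noetherian
      refine ⟨s, hsS, fun N => ?_⟩
      obtain ⟨F, hFfg, hFle, hFs⟩ := hs (N.map f)
      refine ⟨F.comap f, ?_, ?_, ?_⟩
      · apply Submodule.fg_of_fg_map_injective f hf
        have : (F.comap f).map f = F := by
          rw [Submodule.map_comap_eq, inf_eq_right.mpr]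
          intro x hx
          obtain ⟨a, _, rfl⟩ := hFle hx
          exact ⟨a, rfl⟩
        rwa [this]
      · intro x hx
        obtain ⟨a, ha, hax⟩ := hFle hx
        rwa [← hf hax]
      · intro x hx
        have : f (s • x) ∈ F := by
          rw [map_smul]
          exact hFs (f x) (Submodule.mem_map_of_mem hx)
        exact this
    · -- C is u-S-Noetherian
      refine ⟨s, hsS, fun N => ?_⟩
      obtain ⟨F, hFfg, hFle, hFs⟩ := hs (N.comap g)
      refine ⟨F.map g, hFfg.map g, ?_, ?_⟩
      · intro x hx
        obtain ⟨b, hb, rfl⟩ := hx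
        exact hFle hb
      · intro x hx
        obtain ⟨b, rfl⟩ := hg x
        have hb : b ∈ N.comap g := hx
        have : g (s • b) ∈ F.map g := Submodule.mem_map_of_mem (hFs b hb)
        rwa [map_smul] at this
  · rintro ⟨⟨sA, hsA, hA⟩, ⟨sC, hsC, hC⟩⟩
    refine ⟨sA * sC, S.mul_mem hsA hsC, fun N => ?_⟩
    obtain ⟨FC, hFCfg, hFCle, hFCs⟩ := hC (N.map g)
    obtain ⟨P, hPfg, hPle, hPmap⟩ := exists_fg_le_map_eq g N FC hFCfg hFCle
    obtain ⟨FA, hFAfg, hFAle, hFAs⟩ := hA (N.comap f)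
    refine ⟨P ⊔ FA.map f, hPfg.sup (hFAfg.map f), ?_, ?_⟩
    · rw [sup_le_iff]
      refine ⟨hPle, ?_⟩
      calc FA.map f ≤ (N.comap f).map f := Submodule.map_mono hFAle
        _ ≤ N := Submodule.map_comap_le f N
    · intro x hx
      have h1 : sC • g x ∈ FC := hFCs (g x) (Submodule.mem_map_of_mem hx)
      rw [← hPmap] at h1
      obtain ⟨y, hyP, hgy⟩ := h1
      have hker : sC • x - y ∈ LinearMap.range f := by
        rw [hfg, LinearMap.mem_ker, map_sub, map_smul, hgy, sub_self]
      obtain ⟨a, ha⟩ := hker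
      have haN : a ∈ N.comap f := by
        have : f a ∈ N := by
          rw [ha]
          exact sub_mem (Submodule.smul_mem N sC hx) (hPle hyP)
        exact this
      have h2 : sA • a ∈ FA := hFAs a haN
      have key : (sA * sC) • x = f (sA • a) + sA • y := by
        rw [map_smul, ha, smul_sub, mul_smul]
        abel
      rw [key]
      exact Submodule.add_mem _
        (Submodule.mem_sup_right (Submodule.mem_map_of_mem h2))
        (Submodule.mem_sup_left (Submodule.smul_mem P sA hyP))
end

section
/- Let R be a commutative ring and M an R-module. The following are equivalent: (1) M is a Noetherian R-module; (2) M is u-(R∖𝔭)-Noetherian for every prime ideal 𝔭 of R; (3) M is u-(R∖𝔪)-Noetherian for every maximal ideal 𝔪 of R. -/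
/-- `M` is Noetherian iff `M` is `u`-`(R∖𝔭)`-Noetherian for every prime `𝔭`, iff
`M` is `u`-`(R∖𝔪)`-Noetherian for every maximal ideal `𝔪`. -/
theorem noetherian_iff_uSNoetherian_at_primes
    (R : Type*) [CommRing R] (M : Type*) [AddCommGroup M] [Module R M] :
    List.TFAE
      [ IsNoetherian R M,
        ∀ (p : Ideal R) (hp : p.IsPrime),
          IsUSNoetherian R (@Ideal.primeCompl R _ p hp) M,
        ∀ (m : Ideal R) (hm : m.IsMaximal),
          IsUSNoetherian R (@Ideal.primeCompl R _ m hm.isPrime) M ] := by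
  tfae_have 1 → 2
  | h, p, hp => ⟨1, (Ideal.primeCompl p).one_mem, fun N =>
      ⟨N, IsNoetherian.noetherian N, le_rfl, fun x hx => by simpa using hx⟩⟩
  tfae_have 2 → 3
  | h, m, hm => h m hm.isPrime
  tfae_have 3 → 1
  | h => by
    rw [isNoetherian_def]
    intro N
    choose s hs P using fun (m : {m : Ideal R // m.IsMaximal}) => h m.1 m.2
    choose F hfg hle hmem using fun m => P m N
    have hspan : Ideal.span (Set.range s) = ⊤ := by
      by_contra hne
      obtain ⟨m, hm, hle'⟩ := Ideal.exists_le_maximal _ hne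
      exact hs ⟨m, hm⟩ (hle' (Ideal.subset_span ⟨⟨m, hm⟩, rfl⟩))
    have h1 : (1 : R) ∈ Ideal.span (Set.range s) := hspan ▸ Submodule.mem_top
    rw [Ideal.span, Finsupp.mem_span_range_iff_exists_finsupp] at h1
    obtain ⟨c, hc⟩ := h1
    set G := c.support.sup F with hG
    have hGfg : G.FG := Submodule.fg_finset_sup _ _ (fun m _ => hfg m)
    have hGle : G ≤ N := Finset.sup_le fun m _ => hle m
    have hNle : N ≤ G := by
      intro x hx
      have hxeq : x = ∑ m ∈ c.support, c m • (s m • x) := by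
        calc x = (c.sum fun m a => a • s m) • x := by rw [hc, one_smul]
        _ = ∑ m ∈ c.support, (c m • s m) • x := by
            rw [Finsupp.sum, Finset.sum_smul]
        _ = ∑ m ∈ c.support, c m • (s m • x) := by
            simp only [smul_eq_mul, mul_smul]
      rw [hxeq]
      exact Submodule.sum_mem _ fun m hm => Submodule.smul_mem _ _
        ((Finset.le_sup hm : F m ≤ G) (hmem m x hx))
    exact le_antisymm hGle hNle ▸ hGfg
  tfae_finish
end

section
/- Let R be a commutative ring, S a multiplicative subset of R, and F a u-S-flat R-module. Then the localization F_S = S⁻¹F is a flat module over the localized ring R_S = S⁻¹R. -/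
universe u v w

/-- `F` is `u`-`S`-flat: for every injective linear map `f : A → B`, the kernel of
`f ⊗ id_F` is `u`-`S`-torsion. -/
def IsUSFlat (R : Type u) [CommRing R] (S : Submonoid R)
    (F : Type v) [AddCommGroup F] [Module R F] : Prop :=
  ∀ (A B : Type w) [AddCommGroup A] [AddCommGroup B] [Module R A] [Module R B]
    (f : A →ₗ[R] B), Function.Injective f →
      ∃ s ∈ S, ∀ x ∈ LinearMap.ker (LinearMap.rTensor F f), s • x = 0

open TensorProduct LinearMap

set_option maxHeartbeats 1000000
set_option synthInstance.maxHeartbeats 1000000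

/-- The kernel of `I ⊗ F → R ⊗ F` is `u`-`S`-torsion, for `I` an ideal. -/
lemma torsion_ker_of_uSFlat (R : Type u) [CommRing R] (S : Submonoid R)
    (F : Type v) [AddCommGroup F] [Module R F]
    (hF : IsUSFlat.{u, v, max u v} R S F) (I : Ideal R) :
    ∃ s ∈ S, ∀ x ∈ LinearMap.ker (LinearMap.rTensor F I.subtype), s • x = 0 := by
  let eI : ULift.{v} I ≃ₗ[R] I := ULift.moduleEquiv
  let eR : ULift.{v} R ≃ₗ[R] R := ULift.moduleEquiv
  let f : ULift.{v} I →ₗ[R] ULift.{v} R :=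
    eR.symm.toLinearMap ∘ₗ I.subtype ∘ₗ eI.toLinearMap
  have hf : Function.Injective f := by
    simp only [f, LinearMap.coe_comp, LinearEquiv.coe_coe]
    exact eR.symm.injective.comp (I.injective_subtype.comp eI.injective)
  obtain ⟨s, hsS, hs⟩ := hF (ULift.{v} I) (ULift.{v} R) f hf
  refine ⟨s, hsS, fun x hx => ?_⟩
  have hker : ∀ y ∈ LinearMap.ker (rTensor F f), s • y = 0 := hs
  set y : ULift.{v} I ⊗[R] F := (eI.rTensor F).symm x with hy
  have hxy : (eI.rTensor F) y = x := (eI.rTensor F).apply_symm_apply x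
  have hfy : rTensor F f y = 0 := by
    have : rTensor F f = rTensor F eR.symm.toLinearMap ∘ₗ rTensor F I.subtype ∘ₗ
        rTensor F eI.toLinearMap := by
      simp only [f, rTensor_comp]
    rw [this]
    have h1 : rTensor F eI.toLinearMap y = x := hxy
    simp only [LinearMap.comp_apply, h1]
    rw [LinearMap.mem_ker.mp hx]
    simp
  have := hker y hfy
  have : (eI.rTensor F) (s • y) = 0 := by rw [this]; simp
  rwa [map_smul, hxy] at this

/-- If `F` is `u`-`S`-flat over `R`, then `F_S` is flat over `R_S`. -/
theorem flat_localization_of_uSFlat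
    (R : Type u) [CommRing R] (S : Submonoid R)
    (F : Type v) [AddCommGroup F] [Module R F]
    (hF : IsUSFlat.{u, v, max u v} R S F) :
    Module.Flat (Localization S) (LocalizedModule S F) := by
  -- Step 1: `Localization S ⊗[R] F` is a flat `R`-module.
  have flatQF : Module.Flat R (Localization S ⊗[R] F) := by
    rw [Module.Flat.iff_rTensor_injective']
    intro I
    obtain ⟨s, hsS, hs⟩ := torsion_ker_of_uSFlat R S F hF I
    set g := rTensor F I.subtype with hg
    -- `Q ⊗ ker g = 0` since `s` kills `ker g` and is invertible on `Q`.
    have hQK : ∀ z : Localization S ⊗[R] (LinearMap.ker g : Type (max u v)), z = 0 := by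
      intro z
      have hsz : s • z = 0 := by
        induction z using TensorProduct.induction_on with
        | zero => rw [smul_zero]
        | tmul q k =>
          rw [← tmul_smul]
          have : s • (k : ↥I ⊗[R] F) = 0 := hs k.1 k.2
          have hk : s • k = 0 := Subtype.ext (by simpa using this)
          rw [hk, tmul_zero]
        | add x y hx hy => rw [smul_add, hx, hy, add_zero]
      have hu : IsUnit (algebraMap R (Localization S) s) := IsLocalization.map_units (Localization S) ⟨s, hsS⟩
      have h2 : (algebraMap R (Localization S) s) • z = 0 := by rwa [algebraMap_smul]
      rw [← hu.unit_spec, ← Units.smul_def] at h2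
      calc z = hu.unit⁻¹ • (hu.unit • z) := (inv_smul_smul hu.unit z).symm
        _ = 0 := by rw [h2, smul_zero]
    -- hence `lTensor (Localization S) g` is injective
    have hinj : Function.Injective (lTensor (Localization S) g) := by
      intro x y hxy
      have hexact : Function.Exact ((LinearMap.ker g).subtype) g :=
        LinearMap.exact_subtype_ker_map g
      have hex : Function.Exact (((LinearMap.ker g).subtype).lTensor (Localization S)) (g.lTensor (Localization S)) :=
        Module.Flat.lTensor_exact (M := Localization S) (R := R)
          (N := LinearMap.ker g) (N' := I ⊗[R] F) (N'' := R ⊗[R] F) hexact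
      have hx : lTensor (Localization S) g (x - y) = 0 := by rw [map_sub, hxy, sub_self]
      obtain ⟨w, hw⟩ := (hex (x - y)).mp hx
      have hxy0 : x - y = 0 := by rw [← hw, hQK w, map_zero]
      exact sub_eq_zero.mp hxy0
    -- transport along `leftComm`
    have hcomm : (TensorProduct.leftComm R R (Localization S) F).toLinearMap ∘ₗ rTensor (Localization S ⊗[R] F) I.subtype
        = lTensor (Localization S) g ∘ₗ (TensorProduct.leftComm R I (Localization S) F).toLinearMap := by
      ext a q x
      rfl
    have : Function.Injective ((TensorProduct.leftComm R R (Localization S) F).toLinearMap ∘ₗ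
        rTensor (Localization S ⊗[R] F) I.subtype) := by
      rw [hcomm]
      exact hinj.comp (TensorProduct.leftComm R I (Localization S) F).injective
    intro a b hab
    exact this (by simp only [LinearMap.comp_apply, hab])
  -- Step 2: transport flatness along the base-change equivalence.
  have hlm : IsLocalizedModule S (LocalizedModule.mkLinearMap S F) := inferInstance
  have hbc : IsBaseChange (Localization S) (LocalizedModule.mkLinearMap S F) :=
    (isLocalizedModule_iff_isBaseChange S (Localization S) (LocalizedModule.mkLinearMap S F)).mp hlm
  have e : (Localization S ⊗[R] F) ≃ₗ[R] LocalizedModule S F := hbc.equiv.restrictScalars R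
  have flatR : Module.Flat R (LocalizedModule S F) :=
    Module.Flat.of_linearEquiv e.symm
  -- Step 3: an `R_S`-module flat over `R` is flat over `R_S`.
  have hid : IsLocalizedModule S (LinearMap.id : LocalizedModule S F →ₗ[R] LocalizedModule S F) :=
    isLocalizedModule_id (S := S) (M := LocalizedModule S F) (Localization S)
  exact Module.Flat.of_isLocalizedModule (Rp := Localization S) (Mp := LocalizedModule S F) S
    (LinearMap.id (M := LocalizedModule S F))
end

section
/- Let R be a commutative ring and F an R-module. The following are equivalent: (1) F is a flat R-module; (2) F is u-(R∖𝔭)-flat for every prime ideal 𝔭 of R; (3) F is u-(R∖𝔪)-flat for every maximal ideal 𝔪 of R. -/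
universe u v w

/-- `F` is flat iff `F` is `u`-`(R∖𝔭)`-flat for every prime `𝔭`, iff `F` is
`u`-`(R∖𝔪)`-flat for every maximal ideal `𝔪`. -/
theorem flat_iff_uSFlat_at_primes
    (R : Type u) [CommRing R] (F : Type v) [AddCommGroup F] [Module R F] :
    List.TFAE
      [ Module.Flat R F,
        ∀ (p : Ideal R) (hp : p.IsPrime),
          IsUSFlat.{u, v, max u v} R (@Ideal.primeCompl R _ p hp) F,
        ∀ (m : Ideal R) (hm : m.IsMaximal),
          IsUSFlat.{u, v, max u v} R (@Ideal.primeCompl R _ m hm.isPrime) F ] := by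
  tfae_have 1 → 2 := by
    intro hF p hp A B _ _ _ _ f hf
    refine ⟨1, p.primeCompl.one_mem, fun x hx => ?_⟩
    have hinj := (Module.Flat.iff_rTensor_preserves_injective_linearMap).mp hF f hf
    have : x = 0 := hinj (by simpa using hx)
    simp [this]
  tfae_have 2 → 3 := fun h m hm => h m hm.isPrime
  tfae_have 3 → 1 := by
    intro h
    rw [Module.Flat.iff_rTensor_preserves_injective_linearMap]
    intro A B _ _ _ _ f hf
    rw [← LinearMap.ker_eq_bot]
    rw [Submodule.eq_bot_iff]
    intro x hx
    -- annihilator ideal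
    set I : Ideal R := Submodule.span R {r : R | r • x = 0} with hI
    have hIann : ∀ r ∈ ({r : R | r • x = 0} : Set R), r • x = 0 := fun r hr => hr
    have hImem : ∀ r ∈ I, r • x = 0 := by
      intro r hr
      induction hr using Submodule.span_induction with
      | mem r hr => exact hr
      | zero => simp
      | add a b _ _ ha hb => rw [add_smul, ha, hb, add_zero]
      | smul c a _ ha => rw [smul_assoc, ha, smul_zero]
    have hItop : I = ⊤ := by
      by_contra hne
      obtain ⟨m, hm, hIm⟩ := I.exists_le_maximal hne
      obtain ⟨s, hs, hsx⟩ := h m hm A B f hf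
      exact hs (hIm (Submodule.subset_span (hsx x hx)))
    have : (1 : R) • x = 0 := hImem 1 (hItop ▸ trivial)
    simpa using this
  tfae_finish
end

section
/- Let R be a commutative ring and S a multiplicative subset of R consisting of non-zero-divisors. Then R is u-S-von Neumann regular if and only if R is von Neumann regular. -/
/-- `R` is `u`-`S`-von Neumann regular: a single `s ∈ S` works for all `a ∈ R`. -/
def IsUSVonNeumannRegular (R : Type*) [CommRing R] (S : Submonoid R) : Prop :=
  ∃ s ∈ S, ∀ a : R, ∃ r : R, s * a = r * a ^ 2

/-- If `S` consists of non-zero-divisors, then `R` is `u`-`S`-von Neumann regular iff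
`R` is von Neumann regular. -/
theorem uSVonNeumannRegular_iff_vonNeumannRegular_of_regular
    (R : Type*) [CommRing R] (S : Submonoid R)
    (hS : ∀ s ∈ S, s ∈ nonZeroDivisors R) :
    IsUSVonNeumannRegular R S ↔ ∀ a : R, ∃ r : R, a = r * a ^ 2 := by
  constructor
  · rintro ⟨s, hs, h⟩ a
    obtain ⟨r, hr⟩ := h (s * a)
    refine ⟨r, ?_⟩
    have hs2 : s * s ∈ nonZeroDivisors R :=
      mul_mem (hS s hs) (hS s hs)
    have key : (s * s) * a = (s * s) * (r * a ^ 2) := by ring_nf; ring_nf at hr; linear_combination hr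
    exact (mul_cancel_left_mem_nonZeroDivisors hs2).mp key
  · rintro h
    exact ⟨1, S.one_mem, fun a => by simpa using h a⟩
end

section
/- Let R be a commutative ring. The following are equivalent: (1) R is von Neumann regular; (2) R is u-(R∖𝔭)-von Neumann regular for every prime ideal 𝔭 of R; (3) R is u-(R∖𝔪)-von Neumann regular for every maximal ideal 𝔪 of R. -/
/-- `R` is von Neumann regular iff `R` is `u`-`(R∖𝔭)`-von Neumann regular for every
prime `𝔭`, iff `R` is `u`-`(R∖𝔪)`-von Neumann regular for every maximal ideal `𝔪`. -/
theorem vonNeumannRegular_iff_uSVNR_at_primes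
    (R : Type*) [CommRing R] :
    List.TFAE
      [ ∀ a : R, ∃ r : R, a = r * a ^ 2,
        ∀ (p : Ideal R) (hp : p.IsPrime),
          IsUSVonNeumannRegular R (@Ideal.primeCompl R _ p hp),
        ∀ (m : Ideal R) (hm : m.IsMaximal),
          IsUSVonNeumannRegular R (@Ideal.primeCompl R _ m hm.isPrime) ] := by
  tfae_have 1 → 2 := by
    intro h p hp
    exact ⟨1, p.primeCompl.one_mem, fun a => by
      obtain ⟨r, hr⟩ := h a; exact ⟨r, by rw [one_mul, ← hr]⟩⟩
  tfae_have 2 → 3 := fun h m hm => h m hm.isPrime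
  tfae_have 3 → 1 := by
    intro h a
    set J : Ideal R := (Ideal.span {a ^ 2}).colon (Ideal.span {a}) with hJ
    have hJtop : J = ⊤ := by
      by_contra hne
      obtain ⟨m, hm, hle⟩ := Ideal.exists_le_maximal J hne
      obtain ⟨s, hs, hsa⟩ := h m hm
      obtain ⟨r, hr⟩ := hsa a
      have : s ∈ J :=
        Submodule.mem_colon_span_singleton.mpr
          (Ideal.mem_span_singleton.mpr ⟨r, by rw [smul_eq_mul, hr, mul_comm]⟩)
      exact hs (hle this)
    have h1 : (1 : R) ∈ J := hJtop ▸ Submodule.mem_top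
    obtain ⟨t, ht⟩ := Ideal.mem_span_singleton.mp (Submodule.mem_colon_span_singleton.mp h1)
    exact ⟨t, by rw [one_smul, mul_comm] at ht; exact ht⟩
  tfae_finish
end

section
/- Let R be a commutative ring and S a multiplicative subset of R. If R is u-S-von Neumann regular, then the localization R_S = S⁻¹R is a von Neumann regular ring. -/
/-- If `R` is `u`-`S`-von Neumann regular, then the localization `R_S` is a von Neumann
regular ring. -/
theorem vonNeumannRegular_localization_of_uSVNR
    (R : Type*) [CommRing R] (S : Submonoid R)
    (hR : IsUSVonNeumannRegular R S) :
    ∀ a : Localization S, ∃ r : Localization S, a = r * a ^ 2 := by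
  obtain ⟨s, hs, h⟩ := hR
  intro a
  induction a using Localization.induction_on with
  | H p =>
    obtain ⟨x, t⟩ := p
    obtain ⟨r, hr⟩ := h x
    refine ⟨Localization.mk (r * t) ⟨s, hs⟩, ?_⟩
    rw [sq, Localization.mk_mul, Localization.mk_mul,
      Localization.mk_eq_mk_iff]
    apply Localization.r_of_eq
    simp only [Submonoid.coe_mul]
    linear_combination (t : R) * t * hr
end

section
/- Let R be a commutative ring and M an R-module. The following are equivalent: (1) M is an Artinian R-module; (2) M is u-(R∖𝔭)-Artinian for every prime ideal 𝔭 of R; (3) M is u-(R∖𝔪)-Artinian for every maximal ideal 𝔪 of R. -/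
/-- `M` is `u`-`S`-Artinian: a single `s ∈ S` makes every descending chain of
submodules of `M` `S`-stationary. -/
def IsUSArtinian (R : Type*) [CommRing R] (S : Submonoid R)
    (M : Type*) [AddCommGroup M] [Module R M] : Prop :=
  ∃ s ∈ S, ∀ c : ℕ → Submodule R M, Antitone c →
    ∃ k : ℕ, ∀ n ≥ k, ∀ x ∈ c k, s • x ∈ c n

/-- `M` is Artinian iff `M` is `u`-`(R∖𝔭)`-Artinian for every prime `𝔭`, iff `M` is
`u`-`(R∖𝔪)`-Artinian for every maximal ideal `𝔪`. -/
theorem artinian_iff_uSArtinian_at_primes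
    (R : Type*) [CommRing R] (M : Type*) [AddCommGroup M] [Module R M] :
    List.TFAE
      [ IsArtinian R M,
        ∀ (p : Ideal R) (hp : p.IsPrime),
          IsUSArtinian R (@Ideal.primeCompl R _ p hp) M,
        ∀ (m : Ideal R) (hm : m.IsMaximal),
          IsUSArtinian R (@Ideal.primeCompl R _ m hm.isPrime) M ] := by
  tfae_have 1 → 2
  | h, p, hp => by
    refine ⟨1, p.primeCompl.one_mem, fun c hc => ?_⟩
    obtain ⟨k, hk⟩ := IsArtinian.monotone_stabilizes
      (⟨fun n => OrderDual.toDual (c n), fun a b hab => hc hab⟩ : ℕ →o (Submodule R M)ᵒᵈ)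
    exact ⟨k, fun n hn x hx => by
      have : c k = c n := hk n hn
      simpa [this] using hx⟩
  tfae_have 2 → 3
  | h, m, hm => h m hm.isPrime
  tfae_have 3 → 1
  | h => by
    rw [← monotone_stabilizes_iff_artinian]
    intro f
    set c : ℕ → Submodule R M := fun n => OrderDual.ofDual (f n) with hcdef
    have hc : Antitone c := fun a b hab => f.monotone hab
    -- the ideal of elements `r` that eventually multiply the chain into the tail
    set J : Ideal R :=
      { carrier := {r : R | ∃ k : ℕ, ∀ n ≥ k, ∀ x ∈ c k, r • x ∈ c n}
        zero_mem' := ⟨0, fun n _ x _ => by simp⟩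
        add_mem' := by
          rintro a b ⟨ka, hka⟩ ⟨kb, hkb⟩
          refine ⟨max ka kb, fun n hn x hx => ?_⟩
          have hxa : x ∈ c ka := hc (le_max_left ka kb) hx
          have hxb : x ∈ c kb := hc (le_max_right ka kb) hx
          have h1 : a • x ∈ c n := hka n (le_trans (le_max_left ka kb) hn) x hxa
          have h2 : b • x ∈ c n := hkb n (le_trans (le_max_right ka kb) hn) x hxb
          simpa [add_smul] using (c n).add_mem h1 h2
        smul_mem' := by
          rintro r a ⟨ka, hka⟩
          refine ⟨ka, fun n hn x hx => ?_⟩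
          have := hka n hn x hx
          simpa [smul_smul] using (c n).smul_mem r this } with hJdef
    have hJtop : J = ⊤ := by
      by_contra hne
      obtain ⟨m, hm, hJm⟩ := Ideal.exists_le_maximal J hne
      obtain ⟨s, hs, hchain⟩ := h m hm
      obtain ⟨k, hk⟩ := hchain c hc
      exact hs (hJm ⟨k, hk⟩)
    have h1 : (1 : R) ∈ J := hJtop ▸ Submodule.mem_top
    obtain ⟨k, hk⟩ := h1
    refine ⟨k, fun n hn => ?_⟩
    have hle : c k ≤ c n := fun x hx => by simpa using hk n hn x hx
    exact le_antisymm (hc hn) hle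
  tfae_finish
end

section
/- Let R be a commutative ring and S a multiplicative subset of R consisting of non-zero-divisors. If R is a u-S-Artinian ring (i.e. u-S-Artinian as a module over itself), then R is an Artinian ring. -/
/-- If `S` consists of non-zero-divisors and `R` is a `u`-`S`-Artinian ring, then `R`
is an Artinian ring. -/
theorem artinian_of_uSArtinian_of_regular
    (R : Type*) [CommRing R] (S : Submonoid R)
    (hS : ∀ s ∈ S, s ∈ nonZeroDivisors R)
    (hR : IsUSArtinian R S R) :
    IsArtinianRing R := by
  obtain ⟨s, hsS, h⟩ := hR
  -- First show `s` is a unit, using the chain of ideals `span {s^n}`.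
  have hc : Antitone (fun n => Ideal.span ({s ^ n} : Set R)) := by
    intro m n hmn
    simp only [Ideal.span_singleton_le_span_singleton]
    exact ⟨s ^ (n - m), by rw [← pow_add]; congr 1; omega⟩
  obtain ⟨k, hk⟩ := h _ hc
  have hmem : s • (s ^ k) ∈ Ideal.span ({s ^ (k + 2)} : Set R) :=
    hk (k + 2) (by omega) _ (Ideal.mem_span_singleton_self _)
  rw [smul_eq_mul, Ideal.mem_span_singleton] at hmem
  obtain ⟨t, ht⟩ := hmem
  have hst : s * t = 1 := by
    have hreg : s ^ (k + 1) ∈ nonZeroDivisors R := pow_mem (hS s hsS) _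
    have h0 : s ^ (k + 1) * (s * t - 1) = 0 := by
      have : s * s ^ k = s ^ (k + 1) := by ring
      rw [this] at ht
      have : s ^ (k + 2) = s ^ (k + 1) * s := by ring
      rw [this] at ht
      rw [mul_sub, mul_one, ← mul_assoc, ← ht, sub_self]
    have := hreg.2 _ (by rwa [mul_comm] at h0)
    exact sub_eq_zero.mp this
  -- unit cancellation for membership in ideals
  have key : ∀ (I : Ideal R) (x : R), s • x ∈ I → x ∈ I := by
    intro I x hx
    have : x = t * (s • x) := by rw [smul_eq_mul, ← mul_assoc, mul_comm t s, hst, one_mul]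
    rw [this]
    exact I.mul_mem_left t hx
  rw [IsArtinianRing, ← monotone_stabilizes_iff_artinian]
  intro f
  obtain ⟨k, hk⟩ := h (fun n => OrderDual.ofDual (f n)) (fun m n hmn => f.monotone hmn)
  refine ⟨k, fun m hm => ?_⟩
  have h1 : OrderDual.ofDual (f m) ≤ OrderDual.ofDual (f k) := f.monotone hm
  have h2 : OrderDual.ofDual (f k) ≤ OrderDual.ofDual (f m) := by
    intro x hx
    exact key _ x (hk m hm x hx)
  exact le_antisymm (OrderDual.ofDual_le_ofDual.mp h1) (OrderDual.ofDual_le_ofDual.mp h2)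
end

section
/- Let R be a commutative ring and S a multiplicative subset of R. Then R has the u-S-Noetherian spectrum property if and only if the polynomial ring R[X] has the u-S'-Noetherian spectrum property, where S' is the image of S in R[X] under the constant-coefficient embedding R → R[X]. -/
open Polynomial Ideal

namespace USNoeth

variable {A : Type*} [CommRing A]

/-- radically finitely generated up to multiplier `u` -/
def RFG (u : A) (I : Ideal A) : Prop :=
  ∃ J : Ideal A, J.FG ∧ J ≤ I ∧ ∀ x ∈ I, u * x ∈ J.radical

lemma rfg_top (u : A) : RFG u (⊤ : Ideal A) :=
  ⟨⊤, ⟨{1}, by simp⟩, le_rfl, fun x _ => Ideal.le_radical Submodule.mem_top⟩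

lemma upgrade {J : Ideal A} {u x : A} {m n : ℕ} (h : u ^ m * x ^ n ∈ J.radical) :
    u * x ∈ J.radical := by
  have h2 : (u * x) ^ (m + n) ∈ J.radical := by
    have he : (u * x) ^ (m + n) = (u ^ m * x ^ n) * (u ^ n * x ^ m) := by ring
    rw [he]; exact Ideal.mul_mem_right _ _ h
  exact Ideal.mem_radical_of_pow_mem h2

lemma isPrime_of_maximal {u : A} {P : Ideal A} (hP : ¬ RFG u P)
    (hmax : ∀ I : Ideal A, P < I → RFG u I) : P.IsPrime := by
  classical
  constructor
  · rintro rfl; exact hP (rfg_top u)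
  · intro a b hab
    by_contra hcon
    push_neg at hcon
    obtain ⟨ha, hb⟩ := hcon
    apply hP
    have h1 : P < Ideal.span {a} ⊔ P := by
      refine lt_of_le_of_ne le_sup_right (fun h => ha ?_)
      rw [h]
      exact (le_sup_left : Ideal.span {a} ≤ Ideal.span {a} ⊔ P)
        (Ideal.mem_span_singleton_self a)
    have h2 : P < P.colon (Ideal.span {a}) := by
      refine lt_of_le_of_ne
        (fun y hy => Ideal.mem_colon_span_singleton.mpr (Ideal.mul_mem_right a P hy))
        (fun h => hb ?_)
      rw [h]
      exact Ideal.mem_colon_span_singleton.mpr (by rwa [mul_comm])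
    obtain ⟨J₁, hJ₁fg, hJ₁le, hJ₁⟩ := hmax _ h1
    obtain ⟨J₂, hJ₂fg, hJ₂le, hJ₂⟩ := hmax _ h2
    obtain ⟨s₁, rfl⟩ := hJ₁fg
    obtain ⟨s₂, rfl⟩ := hJ₂fg
    have hdec : ∀ g : A, ∃ wv : A × A, g ∈ (↑s₁ : Set A) → wv.2 ∈ P ∧ wv.1 * a + wv.2 = g := by
      intro g
      by_cases hg : g ∈ (↑s₁ : Set A)
      · obtain ⟨cc, dd, hdd, hcd⟩ :=
          Ideal.mem_span_singleton_sup.mp (hJ₁le (Ideal.subset_span hg))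
        exact ⟨(cc, dd), fun _ => ⟨hdd, hcd⟩⟩
      · exact ⟨(0, 0), fun h => absurd h hg⟩
    choose wv hwv using hdec
    have hvle : Ideal.span ((fun g => (wv g).2) '' ↑s₁) ≤ P := by
      rw [Ideal.span_le]; rintro _ ⟨g, hg, rfl⟩; exact (hwv g hg).1
    have hale : Ideal.span ((fun g => a * g) '' ↑s₂) ≤ P := by
      rw [Ideal.span_le]; rintro _ ⟨g, hg, rfl⟩
      have := hJ₂le (Ideal.subset_span hg)
      show a * g ∈ P
      rw [mul_comm]
      exact Ideal.mem_colon_span_singleton.mp this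
    set J : Ideal A :=
      Ideal.span ((fun g => (wv g).2) '' ↑s₁) ⊔ Ideal.span ((fun g => a * g) '' ↑s₂) with hJdef
    refine ⟨J, ?_, sup_le hvle hale, ?_⟩
    · exact (Submodule.fg_span (s₁.finite_toSet.image _)).sup
        (Submodule.fg_span (s₂.finite_toSet.image _))
    · intro x hx
      obtain ⟨n, hn⟩ := hJ₁ x ((le_sup_right : P ≤ _) hx)
      have hn' : (u * x) ^ (n + 1) ∈ Ideal.span (↑s₁ : Set A) := by
        rw [pow_succ]; exact Ideal.mul_mem_right _ _ hn
      have hs₁le : Ideal.span (↑s₁ : Set A) ≤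
          Ideal.span ((fun g => (wv g).2) '' ↑s₁) ⊔ Ideal.span {a} := by
        rw [Ideal.span_le]
        intro g hg
        obtain ⟨hvP, heq⟩ := hwv g hg
        rw [← heq]
        refine add_mem ((le_sup_right : Ideal.span {a} ≤ _) ?_)
          ((le_sup_left : Ideal.span _ ≤ _) (Ideal.subset_span (s := (fun g => (wv g).2) '' ↑s₁) ⟨g, hg, rfl⟩))
        exact Ideal.mem_span_singleton'.mpr ⟨(wv g).1, rfl⟩
      obtain ⟨z, hz, ww, hwm, hsum⟩ := Submodule.mem_sup.mp (hs₁le hn')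
      obtain ⟨y, rfl⟩ := Ideal.mem_span_singleton'.mp hwm
      have hyP : y * a ∈ P := by
        have he : y * a = (u * x) ^ (n + 1) - z := by rw [← hsum]; ring
        rw [he]
        refine sub_mem ?_ (hvle hz)
        have hpow : (u * x) ^ (n + 1) = (u * x) ^ n * (u * x) := by ring
        rw [hpow]
        exact Ideal.mul_mem_left _ _ (Ideal.mul_mem_left _ _ hx)
      obtain ⟨m, hm⟩ := hJ₂ y (Ideal.mem_colon_span_singleton.mpr hyP)
      have hS2 : ∀ zz ∈ Ideal.span (↑s₂ : Set A),
          zz * a ∈ Ideal.span ((fun g => a * g) '' ↑s₂) := by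
        intro zz hzz
        have hco : Ideal.span (↑s₂ : Set A) ≤
            (Ideal.span ((fun g => a * g) '' ↑s₂)).colon (Ideal.span {a}) := by
          rw [Ideal.span_le]
          intro h hh
          refine Ideal.mem_colon_span_singleton.mpr ?_
          rw [mul_comm]
          exact Ideal.subset_span ⟨h, hh, by simp⟩
        exact Ideal.mem_colon_span_singleton.mp (hco hzz)
      have h5 : (u * y) ^ m * a ∈ J :=
        (le_sup_right : Ideal.span ((fun g => a * g) '' ↑s₂) ≤ J) (hS2 _ hm)
      have h6 : u * (y * a) ∈ J.radical := by
        refine Ideal.mem_radical_of_pow_mem (m := m + 1) (Ideal.le_radical ?_)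
        have he : (u * (y * a)) ^ (m + 1) = ((u * y) ^ m * a) * ((u * y) * a ^ m) := by ring
        rw [he]
        exact Ideal.mul_mem_right _ _ h5
      have h7 : u ^ (n + 2) * x ^ (n + 1) ∈ J.radical := by
        have he : u ^ (n + 2) * x ^ (n + 1) = u * z + u * (y * a) := by
          rw [show u * z + u * (y * a) = u * (z + y * a) by ring, hsum]; ring
        rw [he]
        exact add_mem (Ideal.le_radical
          (Ideal.mul_mem_left _ _ ((le_sup_left : Ideal.span _ ≤ J) hz))) h6
      exact upgrade h7

lemma pseudoDivAux {R : Type*} [CommRing R] (f : R[X]) (hf : f ≠ 0) :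
    ∀ (n : ℕ) (x : R[X]), x.natDegree ≤ n →
      ∃ (k : ℕ) (g r : R[X]), r.degree < f.degree ∧ (C f.leadingCoeff) ^ k * x = g * f + r := by
  intro n
  induction n using Nat.strong_induction_on with
  | _ n ih =>
    intro x hxn
    by_cases hdeg : x.degree < f.degree
    · exact ⟨0, 0, x, hdeg, by ring⟩
    · push_neg at hdeg
      have hx0 : x ≠ 0 := by
        intro h
        rw [h, Polynomial.degree_zero, le_bot_iff, Polynomial.degree_eq_bot] at hdeg
        exact hf hdeg
      have hfn_le : f.natDegree ≤ x.natDegree := Polynomial.natDegree_le_natDegree hdeg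
      set d := x.natDegree with hd
      set e := f.natDegree with he
      set x' := C f.leadingCoeff * x - C x.leadingCoeff * f * X ^ (d - e) with hx'
      have hcoeff : ∀ m : ℕ, (d : ℕ) ≤ m → x'.coeff m = 0 := by
        intro m hm
        rw [hx', Polynomial.coeff_sub, Polynomial.coeff_C_mul, Polynomial.coeff_mul_X_pow',
          if_pos (le_trans (Nat.sub_le d e) hm), Polynomial.coeff_C_mul]
        rcases eq_or_lt_of_le hm with heq | hlt
        · rw [← heq, Nat.sub_sub_self (by omega : e ≤ d)]
          rw [Polynomial.coeff_natDegree, Polynomial.coeff_natDegree]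
          ring
        · rw [Polynomial.coeff_eq_zero_of_natDegree_lt hlt,
            Polynomial.coeff_eq_zero_of_natDegree_lt (by omega : e < m - (d - e))]
          ring
      have hdx' : x'.degree < x.degree := by
        rw [Polynomial.degree_eq_natDegree hx0]
        exact (Polynomial.degree_lt_iff_coeff_zero x' d).mpr fun m hm =>
          hcoeff m (by exact_mod_cast hm)
      by_cases hx'0 : x' = 0
      · refine ⟨1, C x.leadingCoeff * X ^ (d - e), 0, ?_, ?_⟩
        · exact lt_of_le_of_lt bot_le
            (by rw [bot_lt_iff_ne_bot, Ne, Polynomial.degree_eq_bot]; exact hf) |>.trans_le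
            (le_of_eq rfl) |>.trans_le le_rfl
        · have : C f.leadingCoeff * x - C x.leadingCoeff * f * X ^ (d - e) = 0 := by
            rw [← hx']; exact hx'0
          have h2 : C f.leadingCoeff * x = C x.leadingCoeff * f * X ^ (d - e) := by
            linear_combination this
          rw [pow_one, h2]; ring
      · have hlt : x'.natDegree < n :=
          lt_of_lt_of_le (Polynomial.natDegree_lt_natDegree hx'0 hdx') hxn
        obtain ⟨k, g, r, h1, h2⟩ := ih x'.natDegree hlt x' le_rfl
        refine ⟨k + 1, g + (C f.leadingCoeff) ^ k * C x.leadingCoeff * X ^ (d - e), r, h1, ?_⟩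
        have h3 : (C f.leadingCoeff) ^ (k + 1) * x =
            (C f.leadingCoeff) ^ k * x' +
              (C f.leadingCoeff) ^ k * (C x.leadingCoeff * f * X ^ (d - e)) := by
          rw [hx']; ring
        rw [h3, h2]; ring

lemma pseudoDiv {R : Type*} [CommRing R] (f : R[X]) (hf : f ≠ 0) (x : R[X]) :
    ∃ (k : ℕ) (g r : R[X]), r.degree < f.degree ∧ (C f.leadingCoeff) ^ k * x = g * f + r :=
  pseudoDivAux f hf x.natDegree x le_rfl
lemma prime_rfg {R : Type*} [CommRing R] {t : R}
    (ht : ∀ I : Ideal R, RFG t I) {P : Ideal R[X]} (hprime : P.IsPrime)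
    (hmax : ∀ I : Ideal R[X], P < I → RFG (C t : R[X]) I) : RFG (C t : R[X]) P := by
  classical
  set p : Ideal R := P.comap (C : R →+* R[X]) with hpdef
  obtain ⟨Jp, hJpfg, hJple, hJp⟩ := ht p
  have hmapP : Ideal.map (C : R →+* R[X]) p ≤ P := Ideal.map_comap_le
  have hJpP : Ideal.map (C : R →+* R[X]) Jp ≤ P := le_trans (Ideal.map_mono hJple) hmapP
  by_cases hcase : ∀ f ∈ P, f ∈ Ideal.map (C : R →+* R[X]) p
  · refine ⟨Ideal.map (C : R →+* R[X]) Jp, hJpfg.map C, hJpP, ?_⟩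
    intro x hx
    rw [Ideal.radical_eq_sInf]
    refine Submodule.mem_sInf.mpr ?_
    rintro Q ⟨hQge, hQprime⟩
    have hq : Jp ≤ Ideal.comap (C : R →+* R[X]) Q := fun y hy =>
      Ideal.mem_comap.mpr (hQge (Ideal.mem_map_of_mem C hy))
    have hqrad : Jp.radical ≤ Ideal.comap (C : R →+* R[X]) Q :=
      ((hQprime.comap (C : R →+* R[X])).radical_le_iff).mpr hq
    refine Ideal.map_comap_le (f := (C : R →+* R[X])) ?_
    rw [Ideal.mem_map_C_iff]
    intro i
    rw [Polynomial.coeff_C_mul]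
    exact hqrad (hJp _ (Ideal.mem_map_C_iff.mp (hcase x hx) i))
  · push_neg at hcase
    have hex : ∃ nn : ℕ, ∃ f : R[X],
        (f ∈ P ∧ f ∉ Ideal.map (C : R →+* R[X]) p) ∧ f.natDegree = nn := by
      obtain ⟨f₀, h1, h2⟩ := hcase
      exact ⟨f₀.natDegree, f₀, ⟨h1, h2⟩, rfl⟩
    obtain ⟨f, ⟨hfP, hfnp⟩, hfdeg⟩ := Nat.find_spec hex
    have hmin : ∀ g : R[X], g ∈ P → g ∉ Ideal.map (C : R →+* R[X]) p →
        Nat.find hex ≤ g.natDegree := by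
      intro g hg1 hg2
      by_contra hlt
      push_neg at hlt
      exact Nat.find_min hex hlt ⟨g, ⟨hg1, hg2⟩, rfl⟩
    have hf0 : f ≠ 0 := fun h => hfnp (h ▸ (Ideal.map (C : R →+* R[X]) p).zero_mem)
    set c := f.leadingCoeff with hc
    have hcp : c ∉ p := by
      intro hcpmem
      have hCc : (C c : R[X]) ∈ Ideal.map (C : R →+* R[X]) p := Ideal.mem_map_of_mem C hcpmem
      have hErP : f.eraseLead ∈ P := by
        rw [← Polynomial.self_sub_C_mul_X_pow]
        exact sub_mem hfP (Ideal.mul_mem_right _ _ (hmapP hCc))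
      have hErnp : f.eraseLead ∉ Ideal.map (C : R →+* R[X]) p := by
        intro h
        apply hfnp
        rw [← Polynomial.eraseLead_add_C_mul_X_pow f]
        exact add_mem h (Ideal.mul_mem_right _ _ hCc)
      have hEr0 : f.eraseLead ≠ 0 := fun h => hErnp (h ▸ zero_mem _)
      have hlt : f.eraseLead.natDegree < f.natDegree :=
        Polynomial.natDegree_lt_natDegree hEr0 (Polynomial.degree_eraseLead_lt hf0)
      have := hmin _ hErP hErnp
      omega
    have hCcP : (C c : R[X]) ∉ P := fun h => hcp (Ideal.mem_comap.mpr h)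
    have hlt : P < Ideal.span {(C c : R[X])} ⊔ P := by
      refine lt_of_le_of_ne le_sup_right (fun h => hCcP ?_)
      rw [h]
      exact (le_sup_left : Ideal.span {(C c : R[X])} ≤ _) (Ideal.mem_span_singleton_self _)
    obtain ⟨J', hJ'fg, hJ'le, hJ'⟩ := hmax _ hlt
    obtain ⟨s', rfl⟩ := hJ'fg
    have hdec : ∀ g : R[X], ∃ wv : R[X] × R[X],
        g ∈ (↑s' : Set R[X]) → wv.2 ∈ P ∧ wv.1 * (C c) + wv.2 = g := by
      intro g
      by_cases hg : g ∈ (↑s' : Set R[X])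
      · obtain ⟨cc, dd, hdd, hcd⟩ :=
          Ideal.mem_span_singleton_sup.mp (hJ'le (Ideal.subset_span hg))
        exact ⟨(cc, dd), fun _ => ⟨hdd, hcd⟩⟩
      · exact ⟨(0, 0), fun h => absurd h hg⟩
    choose wv hwv using hdec
    set J : Ideal R[X] := (Ideal.map (C : R →+* R[X]) Jp ⊔ Ideal.span {f}) ⊔
      Ideal.span ((fun g => (wv g).2) '' ↑s') with hJdef
    have hJle : J ≤ P := by
      refine sup_le (sup_le hJpP ?_) ?_
      · rw [Ideal.span_le, Set.singleton_subset_iff]; exact hfP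
      · rw [Ideal.span_le]; rintro _ ⟨g, hg, rfl⟩; exact (hwv g hg).1
    have hfJ : f ∈ J :=
      (le_sup_left : _ ≤ J) ((le_sup_right : Ideal.span {f} ≤ _)
        (Ideal.mem_span_singleton_self f))
    have hMJ : Ideal.map (C : R →+* R[X]) Jp ≤ J :=
      le_trans le_sup_left le_sup_left
    refine ⟨J, ?_, hJle, ?_⟩
    · exact Submodule.FG.sup (Submodule.FG.sup (hJpfg.map C)
        (Submodule.fg_span (Set.finite_singleton f)))
        (Submodule.fg_span (s'.finite_toSet.image _))
    · intro x hx
      rw [Ideal.radical_eq_sInf]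
      refine Submodule.mem_sInf.mpr ?_
      rintro Q ⟨hQge, hQpr⟩
      by_cases hcQ : (C c : R[X]) ∈ Q
      · have hs'Q : Ideal.span (↑s' : Set R[X]) ≤ Q := by
          rw [Ideal.span_le]
          intro g hg
          obtain ⟨h1, h2⟩ := hwv g hg
          rw [← h2]
          refine add_mem (Ideal.mul_mem_left _ _ hcQ)
            (hQge ((le_sup_right : Ideal.span _ ≤ J) (Ideal.subset_span ?_)))
          exact ⟨g, hg, rfl⟩
        obtain ⟨nn, hnn⟩ := hJ' x ((le_sup_right : P ≤ _) hx)
        exact hQpr.mem_of_pow_mem nn (hs'Q hnn)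
      · have hq : Jp.radical ≤ Ideal.comap (C : R →+* R[X]) Q := by
          refine ((hQpr.comap (C : R →+* R[X])).radical_le_iff).mpr fun y hy =>
            Ideal.mem_comap.mpr (hQge (hMJ (Ideal.mem_map_of_mem C hy)))
        obtain ⟨k, g, r, hdeg, heq⟩ := pseudoDiv f hf0 x
        have hrP : r ∈ P := by
          have he : r = (C c) ^ k * x - g * f := by rw [heq]; ring
          rw [he]
          exact sub_mem (Ideal.mul_mem_left _ _ hx) (Ideal.mul_mem_left _ _ hfP)
        have hrp : r ∈ Ideal.map (C : R →+* R[X]) p := by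
          by_contra hrnp
          have h9 := hmin r hrP hrnp
          have hrne : r ≠ 0 := fun h => hrnp (h ▸ zero_mem _)
          have h10 : r.natDegree < f.natDegree := Polynomial.natDegree_lt_natDegree hrne hdeg
          omega
        have hCtr : (C t : R[X]) * r ∈ Q := by
          refine Ideal.map_comap_le (f := (C : R →+* R[X])) ?_
          rw [Ideal.mem_map_C_iff]
          intro i
          rw [Polynomial.coeff_C_mul]
          exact hq (hJp _ (Ideal.mem_map_C_iff.mp hrp i))
        have h10 : ((C t : R[X]) * x) * (C c) ^ k ∈ Q := by
          have he : ((C t : R[X]) * x) * (C c) ^ k = (C t * g) * f + C t * r := by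
            rw [show ((C t : R[X]) * x) * (C c) ^ k = C t * ((C c) ^ k * x) by ring, heq]
            ring
          rw [he]
          exact add_mem (Ideal.mul_mem_left _ _ (hQge hfJ)) hCtr
        rcases hQpr.mem_or_mem h10 with h | h
        · exact h
        · exact absurd (hQpr.mem_of_pow_mem k h) hcQ

lemma main_forward {R : Type*} [CommRing R] {t : R} (ht : ∀ I : Ideal R, RFG t I) :
    ∀ I : Ideal R[X], RFG (C t : R[X]) I := by
  by_contra hcon
  push_neg at hcon
  obtain ⟨I₀, hI₀⟩ := hcon
  have hzorn : ∀ c ⊆ {I : Ideal R[X] | ¬ RFG (C t : R[X]) I}, IsChain (· ≤ ·) c →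
      ∀ y ∈ c, ∃ ub ∈ {I : Ideal R[X] | ¬ RFG (C t : R[X]) I}, ∀ z ∈ c, z ≤ ub := by
    intro c hcS hchain y hy
    refine ⟨sSup c, ?_, fun z hz => le_sSup hz⟩
    intro hR
    obtain ⟨J, hJfg, hJle, hJ⟩ := hR
    have hcompact := (Submodule.fg_iff_compact J).mp hJfg
    rw [CompleteLattice.isCompactElement_iff_le_of_directed_sSup_le] at hcompact
    obtain ⟨I, hIc, hJI⟩ := hcompact c ⟨y, hy⟩ hchain.directedOn hJle
    exact hcS hIc ⟨J, hJfg, hJI, fun x hx => hJ x (le_sSup hIc hx)⟩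
  obtain ⟨m, hI₀m, hmmax⟩ :=
    zorn_le_nonempty₀ {I : Ideal R[X] | ¬ RFG (C t : R[X]) I} hzorn I₀ hI₀
  have hmS : ¬ RFG (C t : R[X]) m := hmmax.1
  have hmax' : ∀ I : Ideal R[X], m < I → RFG (C t : R[X]) I := by
    intro I hI
    by_contra hn
    exact hI.not_ge (hmmax.2 hn hI.le)
  exact hmS (prime_rfg ht (isPrime_of_maximal hmS hmax') hmax')

end USNoeth

/-- A commutative ring `A` with multiplicative subset `T` has the `u`-`T`-Noetherian
spectrum property: there is `t ∈ T` such that every ideal `I` contains a finitely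
generated ideal `J` with `t • I ⊆ √J`. -/
def HasUSNoetherianSpectrum (A : Type*) [CommRing A] (T : Submonoid A) : Prop :=
  ∃ t ∈ T, ∀ I : Ideal A, ∃ J : Ideal A,
    J.FG ∧ J ≤ I ∧ ∀ x ∈ I, t • x ∈ J.radical

/-- `R` has the `u`-`S`-Noetherian spectrum property iff `R[X]` has the
`u`-`S'`-Noetherian spectrum property, where `S'` is the image of `S` in `R[X]`. -/
theorem uSNoetherianSpectrum_polynomial
    (R : Type*) [CommRing R] (S : Submonoid R) :
    HasUSNoetherianSpectrum R S ↔
      HasUSNoetherianSpectrum (Polynomial R)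
        (S.map (RingHom.toMonoidHom (Polynomial.C : R →+* Polynomial R))) := by
  classical
  constructor
  · rintro ⟨t, htS, ht⟩
    have ht' : ∀ I : Ideal R, USNoeth.RFG t I := by
      intro I
      obtain ⟨J, h1, h2, h3⟩ := ht I
      exact ⟨J, h1, h2, fun x hx => by rw [← smul_eq_mul]; exact h3 x hx⟩
    refine ⟨C t, Submonoid.mem_map_of_mem _ htS, ?_⟩
    intro I
    obtain ⟨J, h1, h2, h3⟩ := USNoeth.main_forward ht' I
    exact ⟨J, h1, h2, fun x hx => by rw [smul_eq_mul]; exact h3 x hx⟩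
  · rintro ⟨t', ht'S, ht'⟩
    obtain ⟨s, hsS, rfl⟩ := Submonoid.mem_map.mp ht'S
    refine ⟨s, hsS, ?_⟩
    intro I
    obtain ⟨J', hJ'fg, hJ'le, hJ'⟩ := ht' (Ideal.map (C : R →+* R[X]) I)
    obtain ⟨F, rfl⟩ := hJ'fg
    refine ⟨Ideal.span ↑(F.biUnion fun pp => pp.coeffs), ⟨_, rfl⟩, ?_, ?_⟩
    · rw [Ideal.span_le]
      intro cc hcc
      rw [Finset.coe_biUnion] at hcc
      simp only [Set.mem_iUnion, Finset.mem_coe] at hcc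
      obtain ⟨pp, hpp, hcc⟩ := hcc
      obtain ⟨i, _, rfl⟩ := Polynomial.mem_coeffs_iff.mp hcc
      exact Ideal.mem_map_C_iff.mp (hJ'le (Ideal.subset_span (Finset.mem_coe.mpr hpp))) i
    · intro x hx
      have h1 := hJ' (C x) (Ideal.mem_map_of_mem C hx)
      rw [smul_eq_mul] at h1
      have h1a : (C s * C x : R[X]) ∈ (Ideal.span (↑F : Set R[X])).radical := h1
      have h1' : (C (s * x) : R[X]) ∈ (Ideal.span (↑F : Set R[X])).radical := by
        rwa [← Polynomial.C_mul] at h1a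
      obtain ⟨n, hn⟩ := h1'
      rw [← map_pow] at hn
      have hspan : Ideal.span (↑F : Set R[X]) ≤
          Ideal.map (C : R →+* R[X]) (Ideal.span ↑(F.biUnion fun pp => pp.coeffs)) := by
        rw [Ideal.span_le]
        intro pp hpp
        rw [SetLike.mem_coe, Ideal.mem_map_C_iff]
        intro i
        by_cases h : pp.coeff i = 0
        · rw [h]; exact zero_mem _
        · refine Ideal.subset_span ?_
          rw [Finset.mem_coe, Finset.mem_biUnion]
          exact ⟨pp, Finset.mem_coe.mp hpp, Polynomial.coeff_mem_coeffs h⟩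
      have h2 := Ideal.mem_map_C_iff.mp (hspan hn) 0
      rw [Polynomial.coeff_C] at h2
      simp only [if_pos rfl] at h2
      rw [smul_eq_mul]
      exact ⟨n, h2⟩
end
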